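/- arXiv:1608.06274 — 5 statements merged into one kernel-verified Lean document; each statement's English description precedes it below -/
import Mathlib

section
/- For every v ∈ ℤ⟨a,b⟩, the functional equation φ_t(v) = κ(v) + Σ_v φ(v₍₁₎)·b·λ_t(v₍₂₎) holds, where the sum is over the coproduct Δ(v) = Σ_v v₍₁₎ ⊗ v₍₂₎. -/
open scoped TensorProduct

noncomputable section

namespace CD


/-- ab-words: `false` represents the letter `a`, `true` represents the letter `b`. -/
abbrev Word := List Bool

/-- The free associative ℤ-algebra ℤ⟨a,b⟩ on two noncommuting variables. -/
abbrev ZAB := MonoidAlgebra ℤ (FreeMonoid Bool)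

/-- The ab-monomial associated to a word. -/
def mon (w : Word) : ZAB := MonoidAlgebra.single (FreeMonoid.ofList w) 1

/-- The variable `a`. -/
def genA : ZAB := mon [false]
/-- The variable `b`. -/
def genB : ZAB := mon [true]
/-- `c = a + b`. -/
def genC : ZAB := genA + genB
/-- `d = ab + ba`. -/
def genD : ZAB := genA * genB + genB * genA
/-- `a - b`. -/
def amb : ZAB := genA - genB

/-- Extend a function defined on ab-monomials to a ℤ-linear map on ℤ⟨a,b⟩. -/
def lin (f : Word → ZAB) : ZAB →ₗ[ℤ] ZAB :=
  Finsupp.lift ZAB ℤ (FreeMonoid Bool) (fun w => f (FreeMonoid.toList w)) ∘ₗ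
    (MonoidAlgebra.coeffLinearEquiv ℤ).toLinearMap

/-- κ : κ(aᵐ) = (a-b)ᵐ, and 0 on all other ab-monomials. -/
def kappaW (w : Word) : ZAB :=
  if ∀ x ∈ w, x = false then amb ^ w.length else 0

/-- β : β(bᵐ) = (a-b)ᵐ, and 0 on all other ab-monomials. -/
def betaW (w : Word) : ZAB :=
  if ∀ x ∈ w, x = true then amb ^ w.length else 0

/-- η : η(bᵐaᵏ) = 2·(a-b)^{m+k}, and 0 on all other ab-monomials. -/
def etaW (w : Word) : ZAB :=
  if List.IsChain (· ≥ ·) w then (2 : ℤ) • amb ^ w.length else 0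

/-- λ_t : λ_t(bᵐ) = (a-b)ᵐ, λ_t(bᵐa) = (a-b)^{m+1}, and 0 on all other ab-monomials. -/
def lamTW (w : Word) : ZAB :=
  if List.IsChain (· ≥ ·) w ∧ w.count false ≤ 1 then amb ^ w.length else 0

/-- λ_ub = η - 2·β. -/
def lamUbW (w : Word) : ZAB := etaW w - (2 : ℤ) • betaW w

/-- ω : first replace each occurrence of ab by 2d, then each remaining letter by c. -/
def omegaW : Word → ZAB
  | [] => 1
  | false :: true :: w => ((2 : ℤ) • genD) * omegaW w
  | _ :: w => genC * omegaW w

/-- H′ : removes the last letter of an ab-monomial (`H′(1) = 0`). -/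
def HpW (w : Word) : ZAB := if w = [] then 0 else mon w.dropLast

/-- r : r(1) = 0, r(v·a) = v, r(v·b) = 0. -/
def rW (w : Word) : ZAB := if w.getLast? = some false then mon w.dropLast else 0

/-- The reversal involution on ab-monomials. -/
def revW (w : Word) : ZAB := mon w.reverse

/-- `conv F G (w) = Σ_w F(w₍₁₎)·b·G(w₍₂₎)`, the sum over the coproduct of the word `w`,
i.e. over all ways of removing one letter from `w`, splitting it in two pieces. -/
def conv (F G : Word → ZAB) (w : Word) : ZAB :=
  ∑ i ∈ Finset.range w.length, F (w.take i) * genB * G (w.drop (i + 1))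

/-- `tailChain lam j (w) = Σ_w η(w₍₁₎)·b·η(w₍₂₎)·b ⋯ b·η(w₍ⱼ₎)·b·lam(w₍ⱼ₊₁₎)`:
a chain of `j` η's followed by the map `lam`, summed over the iterated coproduct. -/
def tailChain (lam : Word → ZAB) : ℕ → Word → ZAB
  | 0 => lam
  | j + 1 => conv etaW (tailChain lam j)

/-- φ_k : φ_1 = κ and, for k ≥ 2, `φ_k(v) = Σ_v κ(v₍₁₎)·b·η(v₍₂₎)·b ⋯ b·η(v₍ₖ₎)`,
the sum over the iterated coproduct Δ^{k-1}. -/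
def phiK : ℕ → Word → ZAB
  | 0 => fun _ => 0
  | 1 => kappaW
  | k + 2 => conv kappaW (tailChain etaW k)

/-- φ_{t,k} : φ_{t,1} = κ and, for k ≥ 2,
`φ_{t,k}(v) = Σ_v κ(v₍₁₎)·b·η(v₍₂₎)·b ⋯ b·η(v₍ₖ₋₁₎)·b·λ_t(v₍ₖ₎)`. -/
def phiTK : ℕ → Word → ZAB
  | 0 => fun _ => 0
  | 1 => kappaW
  | k + 2 => conv kappaW (tailChain lamTW k)

/-- φ_{ub,k} : φ_{ub,1} = κ and, for k ≥ 2,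
`φ_{ub,k}(v) = Σ_v κ(v₍₁₎)·b·η(v₍₂₎)·b ⋯ b·η(v₍ₖ₋₁₎)·b·λ_ub(v₍ₖ₎)`. -/
def phiUbK : ℕ → Word → ZAB
  | 0 => fun _ => 0
  | 1 => kappaW
  | k + 2 => conv kappaW (tailChain lamUbW k)

/-- φ = Σ_{k ≥ 1} φ_k (on a word of length ℓ, only terms with k ≤ ℓ + 1 are nonzero). -/
def phiW (w : Word) : ZAB := ∑ k ∈ Finset.range (w.length + 2), phiK k w

/-- φ_t = Σ_{k ≥ 1} φ_{t,k}. -/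
def phiTW (w : Word) : ZAB := ∑ k ∈ Finset.range (w.length + 2), phiTK k w

/-- φ_ub = Σ_{k ≥ 1} φ_{ub,k}. -/
def phiUbW (w : Word) : ZAB := ∑ k ∈ Finset.range (w.length + 2), phiUbK k w

/-- The coproduct Δ on ℤ⟨a,b⟩: Δ(u₁u₂⋯uₙ) = Σᵢ u₁⋯u_{i-1} ⊗ u_{i+1}⋯uₙ. -/
def Delta : ZAB →ₗ[ℤ] (ZAB ⊗[ℤ] ZAB) :=
  Finsupp.lift (ZAB ⊗[ℤ] ZAB) ℤ (FreeMonoid Bool)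
    (fun w => ∑ i ∈ Finset.range (FreeMonoid.toList w).length,
      mon ((FreeMonoid.toList w).take i) ⊗ₜ[ℤ] mon ((FreeMonoid.toList w).drop (i + 1))) ∘ₗ
    (MonoidAlgebra.coeffLinearEquiv ℤ).toLinearMap

/-- For linear maps F, G, the linear map `u ⊗ w ↦ F(u)·b·G(w)`; applying it to Δ(v)
gives the Sweedler sum `Σ_v F(v₍₁₎)·b·G(v₍₂₎)`. -/
def sandwich (F G : ZAB →ₗ[ℤ] ZAB) : (ZAB ⊗[ℤ] ZAB) →ₗ[ℤ] ZAB :=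
  TensorProduct.lift
    (((LinearMap.mul ℤ ZAB).comp ((LinearMap.mulRight ℤ genB).comp F)).compl₂ G)


/-!
Writing `conv F G` for the Sweedler sum `Σ_v F(v₍₁₎)·b·G(v₍₂₎)` on monomials, `conv` is
associative, because both bracketings sum over the ways of splitting a word into three pieces
around two removed letters. Hence `conv φ_k λ_t = φ_{t,k+1}`, and summing over `k` gives the
identity on monomials; both sides are linear, so it holds on all of ℤ⟨a,b⟩.
-/

lemma conv_nil (F G : Word → ZAB) : conv F G [] = 0 := by simp [conv]

lemma conv_cons (F G : Word → ZAB) (x : Bool) (w : Word) :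
    conv F G (x :: w) = F [] * genB * G w + conv (fun u => F (x :: u)) G w := by
  rw [conv, List.length_cons, Finset.sum_range_succ', add_comm]
  simp only [List.take_succ_cons, List.drop_succ_cons, List.take_zero, List.drop_zero]
  rfl

lemma conv_add_left (F F' G : Word → ZAB) (w : Word) :
    conv (F + F') G w = conv F G w + conv F' G w := by
  simp only [conv, Pi.add_apply, add_mul, Finset.sum_add_distrib]

lemma conv_mul_left (c : ZAB) (F G : Word → ZAB) (w : Word) :
    conv (fun u => c * F u) G w = c * conv F G w := by
  simp only [conv, Finset.mul_sum, mul_assoc]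

lemma conv_sum_left {ι : Type*} (s : Finset ι) (F : ι → Word → ZAB) (G : Word → ZAB)
    (w : Word) : conv (fun u => ∑ k ∈ s, F k u) G w = ∑ k ∈ s, conv (F k) G w := by
  simp only [conv, Finset.sum_mul]
  exact Finset.sum_comm

lemma conv_zero_left (G : Word → ZAB) (w : Word) : conv (fun _ => 0) G w = 0 := by
  simp [conv]

lemma conv_assoc (F G H : Word → ZAB) (w : Word) :
    conv (conv F G) H w = conv F (conv G H) w := by
  induction w generalizing F with
  | nil => simp only [conv_nil]
  | cons x w ih =>
    have hFG : (fun u => conv F G (x :: u)) =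
        (fun u => F [] * genB * G u) + fun u => conv (fun v => F (x :: v)) G u :=
      funext fun u => conv_cons F G x u
    rw [conv_cons, conv_cons, conv_nil, zero_mul, zero_mul, zero_add, hFG, conv_add_left,
      conv_mul_left, ih]

lemma conv_eq_zero_of_length_le (F G : Word → ZAB) (n : ℕ)
    (hG : ∀ u : Word, u.length < n → G u = 0) (w : Word) (hw : w.length ≤ n) : conv F G w = 0 :=
  Finset.sum_eq_zero fun i hi => by
    rw [Finset.mem_range] at hi
    rw [hG _ (by rw [List.length_drop]; omega), mul_zero]

lemma tailChain_eq_zero (lam : Word → ZAB) (j : ℕ) (w : Word) (hw : w.length < j) :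
    tailChain lam j w = 0 := by
  induction j generalizing w with
  | zero => omega
  | succ j ih => exact conv_eq_zero_of_length_le _ _ j ih w (by omega)

lemma phiK_eq_zero (k : ℕ) (w : Word) (hk : w.length + 2 ≤ k) : phiK k w = 0 := by
  obtain ⟨j, rfl⟩ : ∃ j, k = j + 2 := ⟨k - 2, by omega⟩
  exact conv_eq_zero_of_length_le _ _ j (tailChain_eq_zero _ j) w (by omega)

lemma phiTK_length_add_two_eq_zero (w : Word) : phiTK (w.length + 2) w = 0 :=
  conv_eq_zero_of_length_le _ _ _ (tailChain_eq_zero _ _) w le_rfl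

lemma phiW_eq_sum_range (w : Word) (n : ℕ) (hn : w.length ≤ n) :
    phiW w = ∑ k ∈ Finset.range (n + 2), phiK k w :=
  Finset.sum_subset (Finset.range_subset_range.2 (by omega)) fun k _ hk =>
    phiK_eq_zero k w (by simpa using hk)

lemma conv_tailChain_etaW (lam : Word → ZAB) (j : ℕ) (w : Word) :
    conv (tailChain etaW j) lam w = tailChain lam (j + 1) w := by
  induction j generalizing w with
  | zero => rfl
  | succ j ih =>
    show conv (conv etaW (tailChain etaW j)) lam w = conv etaW (tailChain lam (j + 1)) w
    rw [conv_assoc]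
    exact congrArg (conv etaW · w) (funext ih)

lemma conv_phiK_lamTW (k : ℕ) (w : Word) : conv (phiK (k + 1)) lamTW w = phiTK (k + 2) w := by
  cases k with
  | zero => rfl
  | succ k =>
    show conv (conv kappaW (tailChain etaW k)) lamTW w = conv kappaW (tailChain lamTW (k + 1)) w
    rw [conv_assoc]
    exact congrArg (conv kappaW · w) (funext (conv_tailChain_etaW lamTW k))

theorem phiTW_eq_kappaW_add_conv (w : Word) : phiTW w = kappaW w + conv phiW lamTW w := by
  have hphi : conv phiW lamTW w = conv (fun u => ∑ k ∈ Finset.range (w.length + 2), phiK k u)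
      lamTW w :=
    Finset.sum_congr rfl fun i _ => by rw [phiW_eq_sum_range _ w.length (by simp)]
  rw [hphi, conv_sum_left, Finset.sum_range_succ', Finset.sum_range_succ]
  simp only [conv_phiK_lamTW]
  rw [phiTK_length_add_two_eq_zero, phiTW, Finset.sum_range_succ', Finset.sum_range_succ']
  simp only [phiK, phiTK, conv_zero_left]
  abel

lemma linearMap_ext_mon {M : Type*} [AddCommGroup M] {f g : ZAB →ₗ[ℤ] M}
    (h : ∀ w, f (mon w) = g (mon w)) : f = g :=
  MonoidAlgebra.lhom_ext' fun x => LinearMap.ext_ring (h x.toList)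

lemma lin_mon (f : Word → ZAB) (w : Word) : lin f (mon w) = f w := by
  simp [lin, mon]

lemma Delta_mon (w : Word) :
    Delta (mon w) = ∑ i ∈ Finset.range w.length, mon (w.take i) ⊗ₜ[ℤ] mon (w.drop (i + 1)) := by
  simp [Delta, mon]

lemma sandwich_tmul (F G : ZAB →ₗ[ℤ] ZAB) (x y : ZAB) :
    sandwich F G (x ⊗ₜ[ℤ] y) = F x * genB * G y :=
  rfl

lemma sandwich_Delta_mon (F G : Word → ZAB) (w : Word) :
    sandwich (lin F) (lin G) (Delta (mon w)) = conv F G w := by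
  rw [Delta_mon, map_sum]
  exact Finset.sum_congr rfl fun i _ => by
    rw [sandwich_tmul, lin_mon, lin_mon]

/-- the functional equation `φ_t(v) = κ(v) + Σ_v φ(v₍₁₎)·b·λ_t(v₍₂₎)`. -/
theorem phiT_functional_equation (v : ZAB) :
    lin phiTW v = lin kappaW v + sandwich (lin phiW) (lin lamTW) (Delta v) := by
  have h : lin phiTW = lin kappaW + sandwich (lin phiW) (lin lamTW) ∘ₗ Delta :=
    linearMap_ext_mon fun w => by
      simp only [LinearMap.add_apply, LinearMap.comp_apply, lin_mon, sandwich_Delta_mon,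
        phiTW_eq_kappaW_add_conv]
  exact LinearMap.congr_fun h v

end CD

end
end

section
/- For every ab-monomial v, φ_ub(v·a) = φ(v)·(a − b). -/
open scoped TensorProduct

noncomputable section

namespace CD


/-!
Append the letter `a` to `v`. In a Sweedler summand of `φ_{ub,k}(v·a)` the appended `a` either
is the removed letter, and then the last factor is `λ_ub(1) = η(1) - 2β(1) = 0`, or it lands in
the last tensor factor. There `κ(u·a) = κ(u)·(a-b)`, `η(u·a) = η(u)·(a-b)` and `β(u·a) = 0`, so
`λ_ub(u·a) = η(u)·(a-b)` and hence `φ_{ub,k}(v·a) = φ_k(v)·(a-b)`. The sum defining `φ_ub(v·a)`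
has one more term than the one defining `φ(v)`, and that term vanishes: `φ_{|v|+2}(v) = 0`,
since `|v| + 1` letters cannot be removed from `v`.
-/

lemma kappaW_append_false (u : Word) : kappaW (u ++ [false]) = kappaW u * amb := by
  by_cases h : ∀ x ∈ u, x = false
  · have h' : ∀ x ∈ u ++ [false], x = false := by simpa using h
    rw [kappaW, kappaW, if_pos h', if_pos h, List.length_append, List.length_singleton, pow_succ]
  · have h' : ¬ ∀ x ∈ u ++ [false], x = false := by simpa using h
    rw [kappaW, kappaW, if_neg h', if_neg h, zero_mul]

lemma etaW_append_false (u : Word) : etaW (u ++ [false]) = etaW u * amb := by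
  have hchain : List.IsChain (· ≥ ·) (u ++ [false]) ↔ List.IsChain (· ≥ ·) u := by
    simp [List.isChain_append]
  by_cases h : List.IsChain (· ≥ ·) u
  · rw [etaW, etaW, if_pos (hchain.2 h), if_pos h, List.length_append, List.length_singleton,
      pow_succ, smul_mul_assoc]
  · rw [etaW, etaW, if_neg (mt hchain.1 h), if_neg h, zero_mul]

lemma betaW_append_false (u : Word) : betaW (u ++ [false]) = 0 :=
  if_neg fun h => by simpa using h false (by simp)

lemma lamUbW_append_false (u : Word) : lamUbW (u ++ [false]) = etaW u * amb := by
  rw [lamUbW, betaW_append_false, etaW_append_false, smul_zero, sub_zero]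

lemma lamUbW_nil : lamUbW [] = 0 := by
  simp [lamUbW, etaW, betaW]

section conv

variable {F G : Word → ZAB}

lemma conv_append_singleton (u : Word) (x : Bool) :
    conv F G (u ++ [x]) =
      (∑ i ∈ Finset.range u.length, F (u.take i) * genB * G (u.drop (i + 1) ++ [x]))
        + F u * genB * G [] := by
  rw [conv, List.length_append, List.length_singleton, Finset.sum_range_succ, List.take_left,
    List.drop_eq_nil_of_le (by simp)]
  congr 1
  refine Finset.sum_congr rfl fun i hi => ?_
  rw [Finset.mem_range] at hi
  rw [List.take_append_of_le_length hi.le, List.drop_append_of_le_length hi]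

lemma conv_append_singleton_eq_mul {G' : Word → ZAB} {x : Bool} {c : ZAB} (hG : G [] = 0)
    (hGx : ∀ v, G (v ++ [x]) = G' v * c) (u : Word) :
    conv F G (u ++ [x]) = conv F G' u * c := by
  rw [conv_append_singleton, hG, mul_zero, add_zero, conv, Finset.sum_mul]
  exact Finset.sum_congr rfl fun i _ => by rw [hGx, mul_assoc, mul_assoc, mul_assoc]

lemma conv_eq_zero_of_forall_length_lt {w : Word}
    (hG : ∀ v : Word, v.length < w.length → G v = 0) : conv F G w = 0 :=
  Finset.sum_eq_zero fun i hi => by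
    rw [Finset.mem_range] at hi
    rw [hG _ (by rw [List.length_drop]; omega), mul_zero]

end conv

lemma tailChain_eq_zero_of_length_lt (lam : Word → ZAB) {j : ℕ} {u : Word} (h : u.length < j) :
    tailChain lam j u = 0 := by
  induction j generalizing u with
  | zero => omega
  | succ j ih => exact conv_eq_zero_of_forall_length_lt fun v hv => ih (by omega)

lemma tailChain_nil {lam : Word → ZAB} (h : lam [] = 0) : ∀ j, tailChain lam j [] = 0
  | 0 => h
  | _ + 1 => rfl

lemma tailChain_append_singleton_eq_mul {lam lam' : Word → ZAB} {x : Bool} {c : ZAB}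
    (h : lam [] = 0) (hx : ∀ v, lam (v ++ [x]) = lam' v * c) (j : ℕ) (u : Word) :
    tailChain lam j (u ++ [x]) = tailChain lam' j u * c := by
  induction j generalizing u with
  | zero => exact hx u
  | succ j ih => exact conv_append_singleton_eq_mul (tailChain_nil h j) ih u

lemma phiUbK_append_false (k : ℕ) (u : Word) :
    phiUbK k (u ++ [false]) = phiK k u * amb :=
  match k with
  | 0 => (zero_mul amb).symm
  | 1 => kappaW_append_false u
  | j + 2 => conv_append_singleton_eq_mul (tailChain_nil lamUbW_nil j)
      (tailChain_append_singleton_eq_mul lamUbW_nil lamUbW_append_false j) u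

lemma phiK_length_add_two (u : Word) : phiK (u.length + 2) u = 0 :=
  conv_eq_zero_of_forall_length_lt fun _ hv => tailChain_eq_zero_of_length_lt etaW hv

/-- for every ab-monomial `v`, `φ_ub(v·a) = φ(v)·(a-b)`. -/
theorem phiUb_a (w : Word) :
    phiUbW (w ++ [false]) = phiW w * amb := by
  have hlen : (w ++ [false]).length + 2 = w.length + 2 + 1 := by simp
  rw [phiUbW, phiW, hlen, Finset.sum_range_succ, phiUbK_append_false, phiK_length_add_two,
    zero_mul, add_zero, Finset.sum_mul]
  exact Finset.sum_congr rfl fun k _ => phiUbK_append_false k w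

end CD

end
end

section
/- For every ab-monomial v, φ_ub(v·a·b) = 0. -/
open scoped TensorProduct

noncomputable section

namespace CD


/-! Every summand of `φ_{ub,k}(v)` with `k ≥ 2` applies `tailChain λ_ub` to a suffix of `v`, and
each summand of `tailChain λ_ub` in turn applies `λ_ub` to a suffix of that suffix. The suffixes
of words ending in `ab` are `1`, `b` and words ending in `ab`; `λ_ub` kills all of them, since
`η(bᵐ) = 2·(a-b)ᵐ = 2·β(bᵐ)` and neither `η` nor `β` sees a word containing `ab`. Finally `κ`
kills every word containing `b`. -/

def abEndSuffixes : Set Word := {w | ∃ u, w <:+ u ++ [false, true]}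

lemma abEndSuffixes_suffixClosed : ∀ w ∈ abEndSuffixes, ∀ v, v <:+ w → v ∈ abEndSuffixes :=
  fun _ ⟨u, hu⟩ _ hv => ⟨u, hv.trans hu⟩

lemma conv_eq_zero_of_forall_drop {F G : Word → ZAB} {w : Word}
    (hG : ∀ i, G (w.drop (i + 1)) = 0) : conv F G w = 0 :=
  Finset.sum_eq_zero fun i _ => by rw [hG i, mul_zero]

lemma tailChain_eq_zero_of_suffixClosed {lam : Word → ZAB} {S : Set Word}
    (hS : ∀ w ∈ S, ∀ v, v <:+ w → v ∈ S) (hlam : ∀ w ∈ S, lam w = 0) (j : ℕ) :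
    ∀ w ∈ S, tailChain lam j w = 0 := by
  induction j with
  | zero => exact hlam
  | succ j ih =>
    exact fun w hw => conv_eq_zero_of_forall_drop fun i =>
      ih _ (hS w hw _ (List.drop_suffix _ _))

lemma kappaW_eq_zero_of_true_mem {w : Word} (h : true ∈ w) : kappaW w = 0 :=
  if_neg fun hall => Bool.noConfusion (hall true h)

lemma lamUbW_eq_zero_of_forall_eq_true {w : Word} (h : ∀ x ∈ w, x = true) : lamUbW w = 0 := by
  have hchain : List.IsChain (· ≥ ·) w := by
    rw [List.eq_replicate_iff.mpr ⟨rfl, h⟩]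
    exact List.isChain_replicate_of_rel _ le_rfl
  simp only [lamUbW, etaW, betaW, if_pos hchain, if_pos h, sub_self]

lemma lamUbW_eq_zero_of_ab_suffix {w : Word} (h : [false, true] <:+ w) : lamUbW w = 0 := by
  have hchain : ¬ List.IsChain (· ≥ ·) w := fun hc => absurd (hc.suffix h) (by decide)
  have hfalse : ¬ ∀ x ∈ w, x = true := fun hall =>
    Bool.false_ne_true (hall false (h.subset (by simp)))
  simp only [lamUbW, etaW, betaW, if_neg hchain, if_neg hfalse, smul_zero, sub_zero]

lemma lamUbW_eq_zero_of_mem_abEndSuffixes {w : Word} (hw : w ∈ abEndSuffixes) :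
    lamUbW w = 0 := by
  obtain ⟨u, hu⟩ := hw
  rcases List.suffix_or_suffix_of_suffix hu (List.suffix_append u _) with h | h
  · simp only [List.suffix_cons_iff, List.suffix_nil] at h
    rcases h with rfl | rfl | rfl
    · exact lamUbW_eq_zero_of_ab_suffix List.suffix_rfl
    · exact lamUbW_eq_zero_of_forall_eq_true (by simp)
    · exact lamUbW_eq_zero_of_forall_eq_true (by simp)
  · exact lamUbW_eq_zero_of_ab_suffix h

lemma phiUbK_append_ab (k : ℕ) (u : Word) : phiUbK k (u ++ [false, true]) = 0 := by
  match k with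
  | 0 => rfl
  | 1 => exact kappaW_eq_zero_of_true_mem (by simp)
  | k + 2 =>
    exact conv_eq_zero_of_forall_drop fun i =>
      tailChain_eq_zero_of_suffixClosed abEndSuffixes_suffixClosed
        (fun _ => lamUbW_eq_zero_of_mem_abEndSuffixes) k _ ⟨u, List.drop_suffix _ _⟩

/-- for every ab-monomial `v`, `φ_ub(v·a·b) = 0`. -/
theorem phiUb_ab (w : Word) :
    phiUbW (w ++ [false, true]) = 0 :=
  Finset.sum_eq_zero fun k _ => phiUbK_append_ab k w

end CD

end
end

section
/- Let n ≥ 0, let P and P′ be graded posets of rank n+2, and let π : P → P′ be an order-preserving and rank-preserving surjection with π(0̂) = 0̂ and π(1̂) = 1̂. Assume that every chain c = {0̂ = x₀ < x₁ < ⋯ < x_k = 1̂} in P′ with k ≥ 2 has exactly two elementwise preimage chains in P, i.e., exactly two chains {0̂ = y₀ < y₁ < ⋯ < y_k = 1̂} in P with π(yᵢ) = xᵢ for all i. Then Ψ(P) = 2·Ψ(P′) − (a − b)^{n+1}; equivalently, Ψ(P′) = (Ψ(P) + (a − b)^{n+1})/2. -/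
open scoped TensorProduct

noncomputable section

namespace CD


/-- A graded poset: a finite bounded poset with a rank function `rk` such that
`rk ⊥ = 0` and `rk y = rk x + 1` whenever `y` covers `x`. -/
structure GrPoset where
  α : Type
  [fin : Fintype α]
  [deq : DecidableEq α]
  [po : PartialOrder α]
  [bo : BoundedOrder α]
  rk : α → ℕ
  rk_bot : rk ⊥ = 0
  rk_cov : ∀ {x y : α}, x ⋖ y → rk y = rk x + 1

attribute [instance] GrPoset.fin GrPoset.deq GrPoset.po GrPoset.bo

namespace GrPoset

/-- The rank of a graded poset is the rank of its maximal element. -/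
def rank (P : GrPoset) : ℕ := P.rk ⊤

theorem rk_lt (P : GrPoset) : ∀ y x : P.α, x < y → P.rk x < P.rk y := by
  classical
  intro y
  induction y using WellFoundedLT.induction with
  | _ y IH =>
    intro x hxy
    obtain ⟨z, hzM⟩ :=
      Finset.exists_maximal (s := Finset.univ.filter fun z => x ≤ z ∧ z < y)
        ⟨x, by simp [hxy]⟩
    have hz := hzM.1
    have hzmax : ∀ u ∈ (Finset.univ.filter fun z => x ≤ z ∧ z < y), ¬ z < u :=
      fun u hu hzu => lt_irrefl _ (lt_of_lt_of_le hzu (hzM.2 hu hzu.le))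
    simp only [Finset.mem_filter, Finset.mem_univ, true_and] at hz
    have hcov : z ⋖ y := by
      refine ⟨hz.2, fun u hzu huy => ?_⟩
      exact hzmax u (by simp [le_trans hz.1 hzu.le, huy]) hzu
    have hrk := P.rk_cov hcov
    rcases eq_or_lt_of_le hz.1 with rfl | h
    · omega
    · have := IH z hz.2 x h
      omega

theorem rk_mono (P : GrPoset) {x y : P.α} (h : x ≤ y) : P.rk x ≤ P.rk y := by
  rcases eq_or_lt_of_le h with rfl | h
  · exact le_rfl
  · exact (P.rk_lt y x h).le

open Classical in
/-- The Möbius function of a graded poset. -/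
def mu (P : GrPoset) (x y : P.α) : ℤ :=
  if x = y then 1
  else if x ≤ y then
    - ∑ z ∈ (Finset.univ.filter fun z => x ≤ z ∧ z < y).attach, P.mu x z.1
  else 0
termination_by P.rk y
decreasing_by
  · have hz := z.2
    simp only [Finset.mem_filter, Finset.mem_univ, true_and] at hz
    exact P.rk_lt y z.1 hz.2

/-- The Zaslavsky invariant `Z(P) = Σ_x (-1)^{ρ(x)} μ(0̂, x)`. -/
def Z (P : GrPoset) : ℤ := ∑ x : P.α, (-1) ^ (P.rk x) * P.mu ⊥ x

/-- The bounded Zaslavsky invariant `Z_b(P) = (-1)^{ρ(P)} μ(0̂, 1̂)`. -/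
def Zb (P : GrPoset) : ℤ := (-1) ^ P.rank * P.mu ⊥ ⊤

open Classical in
/-- The toric Zaslavsky invariant `Z_t(P) = (-1)^{ρ(P)-1} Σ_{x coatom} μ(0̂, x)`. -/
def Zt (P : GrPoset) : ℤ :=
  (-1) ^ (P.rank - 1) * ∑ x ∈ Finset.univ.filter (fun x : P.α => x ⋖ ⊤), P.mu ⊥ x

/-- The unbounded Zaslavsky invariant `Z_ub = Z - 2·Z_b`. -/
def Zub (P : GrPoset) : ℤ := P.Z - 2 * P.Zb

open Classical in
/-- Interior chains: chains in `P` avoiding `⊥` and `⊤`; these correspond to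
the chains `{0̂ = x₀ < x₁ < ⋯ < x_k = 1̂}` of `P` (by adjoining the endpoints). -/
def intChains (P : GrPoset) : Finset (Finset P.α) :=
  Finset.univ.filter fun Cs => IsChain (· ≤ ·) (Cs : Set P.α) ∧ ⊥ ∉ Cs ∧ ⊤ ∉ Cs

/-- The weight of a chain, computed from the sorted list of the ranks of its
interior elements: `wt = (a-b)^{r₁-1}·b·(a-b)^{r₂-r₁-1}·b ⋯ b·(a-b)^{N-r_{k-1}-1}`. -/
def wtAux (N : ℕ) : ℕ → List ℕ → ZAB
  | r, [] => amb ^ (N - r - 1)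
  | r, s :: t => amb ^ (s - r - 1) * genB * wtAux N s t

/-- The weight of an interior chain. -/
def wt (P : GrPoset) (Cs : Finset P.α) : ZAB :=
  wtAux P.rank 0 ((Cs.image P.rk).sort (· ≤ ·))

/-- The ab-index `Ψ(P) = Σ_c wt(c)`, the sum over all chains of `P` from `0̂` to `1̂`. -/
def psi (P : GrPoset) : ZAB := ∑ Cs ∈ P.intChains, P.wt Cs

/-- The one-element graded poset (used as a junk value). -/
def pt : GrPoset where
  α := Fin 1
  rk := fun _ => 0
  rk_bot := rfl
  rk_cov := fun {x y} h => absurd (Subsingleton.elim x y ▸ h.1) (lt_irrefl y)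

open Classical in
/-- The interval `[x, y]` of a graded poset, as a graded poset with rank function
`z ↦ ρ(z) - ρ(x)` (junk value if `¬ x ≤ y`). -/
def subIcc (P : GrPoset) (x y : P.α) : GrPoset :=
  if hxy : x ≤ y then
    { α := {z : P.α // z ∈ Set.Icc x y}
      fin := Fintype.ofFinite _
      deq := inferInstance
      po := inferInstance
      bo :=
        { top := ⟨y, ⟨hxy, le_refl y⟩⟩
          le_top := fun z => z.2.2
          bot := ⟨x, ⟨le_refl x, hxy⟩⟩
          bot_le := fun z => z.2.1 }
      rk := fun z => P.rk z.1 - P.rk x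
      rk_bot := Nat.sub_self _
      rk_cov := by
        intro z w h
        show P.rk w.1 - P.rk x = (P.rk z.1 - P.rk x) + 1
        have hcov : z.1 ⋖ w.1 :=
          ⟨h.1, fun u hzu huw => by
            have hu : u ∈ Set.Icc x y :=
              Set.mem_Icc.mpr ⟨le_trans z.2.1 hzu.le, le_trans huw.le w.2.2⟩
            exact h.2 (show z < ⟨u, hu⟩ from hzu) (show (⟨u, hu⟩ : _) < w from huw)⟩
        have h1 := P.rk_cov hcov
        have h2 := P.rk_mono z.2.1
        omega }
  else pt


/-- The graded poset obtained by adjoining a new minimum element below the old minimum;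
all ranks of old elements increase by 1. -/
def addZero (P : GrPoset) : GrPoset where
  α := WithBot P.α
  fin := inferInstanceAs (Fintype (Option P.α))
  deq := inferInstance
  po := inferInstance
  bo := { toOrderTop := inferInstance, toOrderBot := inferInstance }
  rk := fun z => match z with | ⊥ => 0 | (w : P.α) => P.rk w + 1
  rk_bot := rfl
  rk_cov := by
    intro x y h
    match x, y with
    | ⊥, ⊥ => exact absurd h.1 (lt_irrefl _)
    | ⊥, (w : P.α) =>
      have hw : w = (⊥ : P.α) := by
        by_contra hne
        exact h.2 (WithBot.bot_lt_coe (⊥ : P.α))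
          (WithBot.coe_lt_coe.mpr (Ne.bot_lt' (Ne.symm hne)))
      subst hw
      simp [P.rk_bot]
    | (z : P.α), ⊥ => exact absurd h.1 (by simp)
    | (z : P.α), (w : P.α) =>
      have hcov : z ⋖ w := by
        refine ⟨WithBot.coe_lt_coe.mp h.1, fun u hzu huw => ?_⟩
        exact h.2 (WithBot.coe_lt_coe.mpr hzu) (WithBot.coe_lt_coe.mpr huw)
      have := P.rk_cov hcov
      simp [this]

open Classical in
/-- The graded poset obtained by deleting all coatoms; all remaining elements other than
`⊤` retain their rank, while `⊤` gets rank one less than before. -/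
def delCoatoms (P : GrPoset) (hP : 2 ≤ P.rank) : GrPoset where
  α := {z : P.α // ¬ z ⋖ ⊤}
  fin := Fintype.ofFinite _
  deq := inferInstance
  po := inferInstance
  bo :=
    { top := ⟨⊤, fun h => absurd h.1 (lt_irrefl _)⟩
      le_top := fun z => le_top (a := z.1)
      bot := ⟨⊥, fun h => by
        have h1 := P.rk_cov h
        rw [P.rk_bot] at h1
        rw [GrPoset.rank] at hP
        omega⟩
      bot_le := fun z => bot_le (a := z.1) }
  rk := fun z => if z.1 = ⊤ then P.rank - 1 else P.rk z.1
  rk_bot := by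
    have hbt : (⊥ : P.α) ≠ ⊤ := by
      intro hbt
      have := P.rk_bot
      rw [hbt] at this
      rw [GrPoset.rank] at hP
      omega
    exact (if_neg hbt).trans P.rk_bot
  rk_cov := by
    intro z w h
    have hzw : z.1 < w.1 := h.1
    have hzt : z.1 ≠ ⊤ := fun hz =>
      absurd (lt_of_lt_of_le (hz ▸ hzw) le_top) (lt_irrefl _)
    show (if w.1 = ⊤ then P.rank - 1 else P.rk w.1)
        = (if z.1 = ⊤ then P.rank - 1 else P.rk z.1) + 1
    by_cases hwt : w.1 = ⊤
    · rw [if_pos hwt, if_neg hzt]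
      obtain ⟨u, huM⟩ :=
        Finset.exists_minimal (s := Finset.univ.filter fun u => z.1 < u)
          ⟨w.1, by simp [hzw]⟩
      have hu := huM.1
      have humin : ∀ v ∈ (Finset.univ.filter fun u => z.1 < u), ¬ v < u :=
        fun v hv hvu => lt_irrefl _ (lt_of_lt_of_le hvu (huM.2 hv hvu.le))
      simp only [Finset.mem_filter, Finset.mem_univ, true_and] at hu
      have hcov : z.1 ⋖ u := ⟨hu, fun v hzv hvu => humin v (by simp [hzv]) hvu⟩
      have hut : u ≠ ⊤ := fun he => z.2 (he ▸ hcov)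
      have hu2 : u ⋖ ⊤ := by
        by_contra hnc
        exact h.2 (show z < (⟨u, hnc⟩ : {z : P.α // ¬ z ⋖ ⊤}) from hu)
          (show (⟨u, hnc⟩ : {z : P.α // ¬ z ⋖ ⊤}) < w from by
            show u < w.1
            rw [hwt]
            exact lt_of_le_of_ne le_top hut)
      have h1 := P.rk_cov hcov
      have h2 : P.rank = P.rk u + 1 := P.rk_cov hu2
      omega
    · have hwlt : w.1 < ⊤ := lt_of_le_of_ne le_top hwt
      have hcov : z.1 ⋖ w.1 := by
        refine ⟨hzw, fun u hzu huw => ?_⟩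
        have hnc : ¬ u ⋖ ⊤ := fun hc => hc.2 huw hwlt
        exact h.2 (show z < (⟨u, hnc⟩ : {z : P.α // ¬ z ⋖ ⊤}) from hzu)
          (show (⟨u, hnc⟩ : {z : P.α // ¬ z ⋖ ⊤}) < w from huw)
      rw [if_neg hzt, if_neg hwt]
      exact P.rk_cov hcov



open Classical in
/-- The flag f-vector entry `f_S(P)`: the number of chains of `P` whose set of
interior ranks is exactly `S`. -/
def fS (P : GrPoset) (S : Finset ℕ) : ℤ :=
  (((P.intChains).filter fun Cs => Cs.image P.rk = S).card : ℤ)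

/-- The flag h-vector entry `h_S(P) = Σ_{T ⊆ S} (-1)^{|S∖T|}·f_T(P)`. -/
def hS (P : GrPoset) (S : Finset ℕ) : ℤ :=
  ∑ T ∈ S.powerset, (-1) ^ ((S \ T).card) * P.fS T

end GrPoset

end CD

/-!
Since `π` is monotone and rank-preserving it is strictly monotone, so it is injective on chains
and `C ↦ π(C)` sends the chains of `P` to chains of `P'` with the same ranks, hence the same
weight. The fibre over the empty chain is the empty chain alone. Over a nonempty chain `c` of
`P'`, a chain of `P` in the fibre, completed by `0̂` and `1̂`, is the same thing as an elementwise
preimage of `c`: the preimage of each element of `c` is the unique element of the chain above it.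
So every other fibre has two elements, and `Ψ(P) = 2 Ψ(P') - wt(∅) = 2 Ψ(P') - (a - b)^{n+1}`.
-/

open Finset

section Chains

variable {α : Type*} [PartialOrder α]

theorem StrictMono.injOn_of_isChain {β : Type*} [Preorder β] {f : α → β} (hf : StrictMono f)
    {s : Set α} (hs : IsChain (· ≤ ·) s) : s.InjOn f := by
  intro a ha b hb hab
  by_contra hne
  rcases hs ha hb hne with h | h
  · exact (hf (h.lt_of_ne hne)).ne hab
  · exact (hf (h.lt_of_ne (Ne.symm hne))).ne hab.symm

/-- Enumerate the chain increasingly along a linear extension of the order. -/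
theorem IsChain.exists_strictMono_fin [DecidableEq α] {s : Finset α}
    (hs : IsChain (· ≤ ·) (s : Set α)) {k : ℕ} (hk : s.card = k) :
    ∃ e : Fin k → α, StrictMono e ∧ univ.image e = s := by
  let t : Finset (LinearExtension α) := s
  let e : Fin k → α := fun i => (t.orderEmbOfFin hk i : LinearExtension α)
  have he : univ.image e = s := by
    apply Finset.coe_injective
    rw [coe_image, coe_univ, Set.image_univ]
    exact t.range_orderEmbOfFin hk
  refine ⟨e, fun i j hij => ?_, he⟩
  have hmem : ∀ i, e i ∈ s := fun i => he ▸ mem_image_of_mem e (mem_univ i)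
  refine hs.lt_of_not_ge (hmem j) (hmem i) fun hji => ?_
  have hji' : toLinearExtension (e j) ≤ toLinearExtension (e i) :=
    toLinearExtension.monotone hji
  exact ((t.orderEmbOfFin hk).strictMono hij).not_ge hji'

theorem Monotone.apply_zero_eq_bot [OrderBot α] {k : ℕ} {e : Fin (k + 1) → α} (he : Monotone e)
    (h : ⊥ ∈ Set.range e) : e 0 = ⊥ := by
  obtain ⟨j, hj⟩ := h
  exact le_bot_iff.mp (hj ▸ he (Fin.zero_le j))

theorem Monotone.apply_last_eq_top [OrderTop α] {k : ℕ} {e : Fin (k + 1) → α} (he : Monotone e)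
    (h : ⊤ ∈ Set.range e) : e (Fin.last k) = ⊤ := by
  obtain ⟨j, hj⟩ := h
  exact top_le_iff.mp (hj ▸ he (Fin.le_last j))

theorem IsChain.insert_bot_insert_top [BoundedOrder α] {s : Set α} (hs : IsChain (· ≤ ·) s) :
    IsChain (· ≤ ·) (insert ⊥ (insert ⊤ s)) :=
  (hs.insert fun _ _ _ => Or.inr le_top).insert fun _ _ _ => Or.inl bot_le

end Chains

section InteriorChains

variable {α β : Type*} [PartialOrder α] [BoundedOrder α]

def IsInteriorChain (C : Finset α) : Prop := IsChain (· ≤ ·) (C : Set α) ∧ ⊥ ∉ C ∧ ⊤ ∉ C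

variable [PartialOrder β] [BoundedOrder β] [DecidableEq β] {f : α → β}

theorem IsInteriorChain.image (hf : StrictMono f) (hbot : f ⊥ = ⊥) (htop : f ⊤ = ⊤)
    {C : Finset α} (hC : IsInteriorChain C) : IsInteriorChain (C.image f) := by
  obtain ⟨hchain, hb, ht⟩ := hC
  refine ⟨?_, fun h => ?_, fun h => ?_⟩
  · rw [coe_image]
    exact hchain.image_of_map_rel _ _ f fun _ _ h => hf.monotone h
  · obtain ⟨a, ha, hfa⟩ := mem_image.mp h
    exact hb (hf.apply_eq_bot_iff.mp (hfa.trans hbot.symm) ▸ ha)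
  · obtain ⟨a, ha, hfa⟩ := mem_image.mp h
    exact ht (hf.apply_eq_top_iff.mp (hfa.trans htop.symm) ▸ ha)

end InteriorChains

section ChainLifts

variable {α β : Type*} [PartialOrder α] [BoundedOrder α] [DecidableEq α]

def properPart (s : Finset α) : Finset α := s.filter fun a => a ≠ ⊥ ∧ a ≠ ⊤

theorem properPart_insert_bot_insert_top {C : Finset α} (hb : ⊥ ∉ C) (ht : ⊤ ∉ C) :
    properPart (insert ⊥ (insert ⊤ C)) = C := by
  ext a
  simp only [properPart, mem_filter, mem_insert]
  constructor
  · rintro ⟨rfl | rfl | ha, hab, hat⟩ <;> simp_all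
  · intro ha
    exact ⟨Or.inr (Or.inr ha), fun h => hb (h ▸ ha), fun h => ht (h ▸ ha)⟩

theorem insert_bot_insert_top_properPart {s : Finset α} (hb : ⊥ ∈ s) (ht : ⊤ ∈ s) :
    insert ⊥ (insert ⊤ (properPart s)) = s := by
  ext a
  simp only [properPart, mem_insert, mem_filter]
  constructor
  · rintro (rfl | rfl | ⟨ha, -⟩) <;> assumption
  · intro ha
    by_cases hab : a = ⊥
    · exact Or.inl hab
    by_cases hat : a = ⊤
    · exact Or.inr (Or.inl hat)
    exact Or.inr (Or.inr ⟨ha, hab, hat⟩)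

theorem IsInteriorChain.exists_strictMono_fin {C : Finset α} (hC : IsInteriorChain C)
    (hbt : (⊥ : α) ≠ ⊤) : ∃ x : Fin (C.card + 1 + 1) → α, StrictMono x ∧ x 0 = ⊥ ∧
      x (Fin.last (C.card + 1)) = ⊤ ∧ properPart (univ.image x) = C := by
  obtain ⟨hchain, hb, ht⟩ := hC
  have hcard : (insert ⊥ (insert ⊤ C)).card = C.card + 1 + 1 := by
    rw [card_insert_of_notMem, card_insert_of_notMem ht]
    simpa [hbt] using hb
  obtain ⟨x, hx, hxS⟩ :=
    IsChain.exists_strictMono_fin (by simpa using hchain.insert_bot_insert_top) hcard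
  have hrange : ∀ a ∈ insert ⊥ (insert ⊤ C), a ∈ Set.range x := fun a ha => by
    rw [← hxS] at ha
    simpa using ha
  refine ⟨x, hx, hx.monotone.apply_zero_eq_bot (hrange ⊥ (mem_insert_self _ _)),
    hx.monotone.apply_last_eq_top (hrange ⊤ (mem_insert_of_mem (mem_insert_self _ _))), ?_⟩
  rw [hxS, properPart_insert_bot_insert_top hb ht]

theorem image_properPart [PartialOrder β] [BoundedOrder β] [DecidableEq β] {f : α → β}
    (hf : StrictMono f) (hbot : f ⊥ = ⊥) (htop : f ⊤ = ⊤) (s : Finset α) :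
    (properPart s).image f = properPart (s.image f) := by
  rw [properPart, properPart, filter_image]
  refine congrArg _ (filter_congr fun a _ => ?_)
  rw [← hbot, ← htop, ne_eq, ne_eq, ne_eq, ne_eq, hf.apply_eq_bot_iff, hf.apply_eq_top_iff]

theorem insert_bot_insert_top_properPart_image_univ {k : ℕ} {y : Fin (k + 1) → α}
    (hy0 : y 0 = ⊥) (hyk : y (Fin.last k) = ⊤) :
    insert ⊥ (insert ⊤ (properPart (univ.image y))) = univ.image y :=
  insert_bot_insert_top_properPart (hy0 ▸ mem_image_of_mem y (mem_univ 0))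
    (hyk ▸ mem_image_of_mem y (mem_univ _))

variable (f : α → β) in
def chainLifts {k : ℕ} (x : Fin (k + 1) → β) : Set (Fin (k + 1) → α) :=
  {y | StrictMono y ∧ y 0 = ⊥ ∧ y (Fin.last k) = ⊤ ∧ ∀ i, f (y i) = x i}

theorem injOn_properPart_chainLifts [Preorder β] {f : α → β} {k : ℕ} {x : Fin (k + 1) → β}
    (hf : StrictMono f) :
    (chainLifts f x).InjOn fun y => properPart (univ.image y) := by
  intro y hy y' hy' h
  have himage : univ.image y = univ.image y' := by
    simp only at h
    rw [← insert_bot_insert_top_properPart_image_univ hy.2.1 hy.2.2.1,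
      ← insert_bot_insert_top_properPart_image_univ hy'.2.1 hy'.2.2.1, h]
  have hchain : IsChain (· ≤ ·) ((univ.image y' : Finset α) : Set α) := by
    rw [coe_image, coe_univ, Set.image_univ]
    exact hy'.1.monotone.isChain_range
  funext i
  refine hf.injOn_of_isChain hchain ?_ (mem_image_of_mem y' (mem_univ i)) ?_
  · exact himage ▸ mem_image_of_mem y (mem_univ i)
  · rw [hy.2.2.2, hy'.2.2.2]

variable [PartialOrder β] [BoundedOrder β] [DecidableEq β] {f : α → β}
variable {k : ℕ} {x : Fin (k + 1) → β}

theorem properPart_mem_of_mem_chainLifts (hf : StrictMono f) (hbot : f ⊥ = ⊥) (htop : f ⊤ = ⊤)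
    {y : Fin (k + 1) → α} (hy : y ∈ chainLifts f x) :
    properPart (univ.image y) ∈
      {C : Finset α | IsInteriorChain C ∧ C.image f = properPart (univ.image x)} := by
  refine ⟨⟨?_, by simp [properPart], by simp [properPart]⟩, ?_⟩
  · refine hy.1.monotone.isChain_range.mono ?_
    rw [← Set.image_univ, ← coe_univ, ← coe_image]
    exact coe_subset.mpr (filter_subset _ _)
  · rw [image_properPart hf hbot htop, image_image]
    congr 2
    exact funext hy.2.2.2

theorem exists_mem_chainLifts (hf : StrictMono f) (hbot : f ⊥ = ⊥) (htop : f ⊤ = ⊤)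
    (hx : StrictMono x) (hx0 : x 0 = ⊥) (hxk : x (Fin.last k) = ⊤) {C : Finset α}
    (hC : IsInteriorChain C) (hCx : C.image f = properPart (univ.image x)) :
    ∃ y ∈ chainLifts f x, properPart (univ.image y) = C := by
  obtain ⟨hC, hb, ht⟩ := hC
  set S := insert ⊥ (insert ⊤ C) with hS
  have hSchain : IsChain (· ≤ ·) (S : Set α) := by
    rw [hS, coe_insert, coe_insert]
    exact hC.insert_bot_insert_top
  have hSx : S.image f = univ.image x := by
    rw [image_insert, image_insert, hbot, htop, hCx]
    exact insert_bot_insert_top_properPart (hx0 ▸ mem_image_of_mem x (mem_univ 0))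
      (hxk ▸ mem_image_of_mem x (mem_univ _))
  choose y hyS hyx using fun i => mem_image.mp (hSx ▸ mem_image_of_mem x (mem_univ i))
  have hy : StrictMono y := fun i j hij =>
    hSchain.lt_of_not_ge (hyS j) (hyS i) fun hji =>
      (hx hij).not_ge (hyx i ▸ hyx j ▸ hf.monotone hji)
  have hy0 : y 0 = ⊥ := hf.apply_eq_bot_iff.mp (by rw [hyx, hx0, hbot])
  have hyk : y (Fin.last k) = ⊤ := hf.apply_eq_top_iff.mp (by rw [hyx, hxk, htop])
  have himage : univ.image y = S := by
    refine Subset.antisymm (fun a ha => ?_) fun a ha => ?_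
    · obtain ⟨i, -, rfl⟩ := mem_image.mp ha
      exact hyS i
    · obtain ⟨i, -, hi⟩ := mem_image.mp (hSx ▸ mem_image_of_mem f ha)
      rw [hf.injOn_of_isChain hSchain ha (hyS i) (by rw [hyx, hi])]
      exact mem_image_of_mem y (mem_univ i)
  exact ⟨y, ⟨hy, hy0, hyk, hyx⟩, by rw [himage, properPart_insert_bot_insert_top hb ht]⟩

theorem ncard_chainLifts (hf : StrictMono f) (hbot : f ⊥ = ⊥) (htop : f ⊤ = ⊤)
    (hx : StrictMono x) (hx0 : x 0 = ⊥) (hxk : x (Fin.last k) = ⊤) :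
    (chainLifts f x).ncard =
      {C : Finset α | IsInteriorChain C ∧ C.image f = properPart (univ.image x)}.ncard := by
  rw [← (injOn_properPart_chainLifts hf).ncard_image]
  congr 1
  ext C
  constructor
  · rintro ⟨y, hy, rfl⟩
    exact properPart_mem_of_mem_chainLifts hf hbot htop hy
  · rintro ⟨hC, hCx⟩
    exact exists_mem_chainLifts hf hbot htop hx hx0 hxk hC hCx

end ChainLifts

namespace CD

namespace GrPoset

variable {P P' : GrPoset}

theorem mem_intChains {C : Finset P.α} : C ∈ P.intChains ↔ IsInteriorChain C := by
  simp [intChains, IsInteriorChain]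

theorem bot_ne_top (h : 0 < P.rank) : (⊥ : P.α) ≠ ⊤ := fun hbt => by
  rw [rank, ← hbt, P.rk_bot] at h
  exact h.ne rfl

theorem strictMono_of_monotone_of_rk_eq {pi : P.α → P'.α} (hmono : Monotone pi)
    (hrank : ∀ u, P'.rk (pi u) = P.rk u) : StrictMono pi := fun a b hab =>
  (hmono hab.le).lt_of_ne fun he => (P.rk_lt b a hab).ne (by rw [← hrank, ← hrank, he])

theorem wt_empty : P.wt ∅ = amb ^ (P.rank - 1) := by
  simp [wt, wtAux]

theorem wt_image {pi : P.α → P'.α} (hrank : ∀ u, P'.rk (pi u) = P.rk u)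
    (hrk : P'.rank = P.rank) (C : Finset P.α) : P'.wt (C.image pi) = P.wt C := by
  rw [wt, wt, image_image, hrk]
  congr 3
  exact funext hrank

theorem empty_mem_intChains : ∅ ∈ P.intChains :=
  mem_intChains.mpr ⟨by simp, by simp, by simp⟩

theorem filter_image_eq_empty (pi : P.α → P'.α) :
    {C ∈ P.intChains | C.image pi = ∅} = {∅} := by
  ext C
  simp only [mem_filter, mem_singleton, image_eq_empty, and_iff_right_iff_imp]
  rintro rfl
  exact empty_mem_intChains

variable {pi : P.α → P'.α}

theorem exists_card_filter_image_eq_ncard_chainLifts (hf : StrictMono pi) (hbot : pi ⊥ = ⊥)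
    (htop : pi ⊤ = ⊤) {C' : Finset P'.α} (hC' : C' ∈ P'.intChains) (hbt : (⊥ : P'.α) ≠ ⊤) :
    ∃ x : Fin (C'.card + 1 + 1) → P'.α, StrictMono x ∧ x 0 = ⊥ ∧ x (Fin.last _) = ⊤ ∧
      #{C ∈ P.intChains | C.image pi = C'} = (chainLifts pi x).ncard := by
  obtain ⟨x, hx, hx0, hxk, hxC'⟩ := (mem_intChains.mp hC').exists_strictMono_fin hbt
  refine ⟨x, hx, hx0, hxk, ?_⟩
  rw [ncard_chainLifts hf hbot htop hx hx0 hxk, hxC', ← Set.ncard_coe_finset]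
  congr 1
  ext C
  simp [mem_intChains]

theorem psi_eq_sum_card_smul_wt (hf : StrictMono pi) (hbot : pi ⊥ = ⊥) (htop : pi ⊤ = ⊤)
    (hrank : ∀ u, P'.rk (pi u) = P.rk u) :
    P.psi = ∑ C' ∈ P'.intChains, #{C ∈ P.intChains | C.image pi = C'} • P'.wt C' := by
  have hrk : P'.rank = P.rank := by rw [rank, rank, ← htop, hrank]
  rw [psi, ← sum_fiberwise_of_maps_to fun C hC =>
    mem_intChains.mpr ((mem_intChains.mp hC).image hf hbot htop)]
  refine sum_congr rfl fun C' _ => ?_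
  rw [← sum_const]
  refine sum_congr rfl fun C hC => ?_
  rw [← (mem_filter.mp hC).2, wt_image hrank hrk]

end GrPoset

theorem psi_double_cover_general (n : ℕ) (P P' : GrPoset)
    (hP' : P'.rank = n + 2)
    (pi : P.α → P'.α) (hmono : Monotone pi)
    (hrank : ∀ u, P'.rk (pi u) = P.rk u)
    (hbot : pi ⊥ = ⊥) (htop : pi ⊤ = ⊤)
    (hcount : ∀ k : ℕ, 2 ≤ k → ∀ x : Fin (k + 1) → P'.α,
      StrictMono x → x 0 = ⊥ → x (Fin.last k) = ⊤ →
      Set.ncard {y : Fin (k + 1) → P.α |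
          StrictMono y ∧ y 0 = ⊥ ∧ y (Fin.last k) = ⊤ ∧ ∀ i, pi (y i) = x i} = 2) :
    P.psi = (2 : ℤ) • P'.psi - amb ^ (n + 1) := by
  have hf := GrPoset.strictMono_of_monotone_of_rk_eq hmono hrank
  have hcard : ∀ C' ∈ P'.intChains,
      #{C ∈ P.intChains | C.image pi = C'} = if C' = ∅ then 1 else 2 := by
    intro C' hC'
    split_ifs with hempty
    · rw [hempty, GrPoset.filter_image_eq_empty, card_singleton]
    obtain ⟨x, hx, hx0, hxk, hfiber⟩ :=
      GrPoset.exists_card_filter_image_eq_ncard_chainLifts hf hbot htop hC'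
        (GrPoset.bot_ne_top (by omega))
    have hk : 1 ≤ C'.card := card_pos.mpr (nonempty_iff_ne_empty.mpr hempty)
    rw [hfiber]
    exact hcount _ (by omega) x hx hx0 hxk
  have hsplit : ∀ C' : Finset P'.α, (if C' = ∅ then 1 else 2) • P'.wt C'
      = (2 : ℤ) • P'.wt C' - if C' = ∅ then P'.wt C' else 0 := by
    intro C'
    split_ifs <;> simp [two_smul]
  rw [GrPoset.psi_eq_sum_card_smul_wt hf hbot htop hrank, sum_congr rfl fun C' hC' => by
    rw [hcard C' hC', hsplit], sum_sub_distrib, ← smul_sum, sum_ite_eq', GrPoset.psi,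
    if_pos GrPoset.empty_mem_intChains, GrPoset.wt_empty, hP']
  rfl

/-- if `π : P → P'` is an order- and rank-preserving surjection of graded
posets of rank `n+2` such that every chain of `P'` from `0̂` to `1̂` of length `k ≥ 2`
has exactly two elementwise preimage chains in `P`, then
`Ψ(P) = 2·Ψ(P') - (a-b)^{n+1}`. -/
theorem psi_double_cover (n : ℕ) (P P' : GrPoset)
    (hP : P.rank = n + 2) (hP' : P'.rank = n + 2)
    (pi : P.α → P'.α) (hmono : Monotone pi)
    (hrank : ∀ u, P'.rk (pi u) = P.rk u)
    (hbot : pi ⊥ = ⊥) (htop : pi ⊤ = ⊤) (hsurj : Function.Surjective pi)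
    (hcount : ∀ k : ℕ, 2 ≤ k → ∀ x : Fin (k + 1) → P'.α,
      StrictMono x → x 0 = ⊥ → x (Fin.last k) = ⊤ →
      Set.ncard {y : Fin (k + 1) → P.α |
          StrictMono y ∧ y 0 = ⊥ ∧ y (Fin.last k) = ⊤ ∧ ∀ i, pi (y i) = x i} = 2) :
    P.psi = (2 : ℤ) • P'.psi - amb ^ (n + 1) :=
  psi_double_cover_general n P P' hP' pi hmono hrank hbot htop hcount


end CD

end
end

section
/- Let n ≥ 1, let A be an m×n real matrix all of whose entries are rational, let b ∈ ℝᵐ, and suppose that V = {x ∈ ℝⁿ : A·x = b} is nonempty, of dimension k as an affine subspace of ℝⁿ. Let π : ℝⁿ → ℝⁿ/ℤⁿ be the quotient map onto the n-dimensional torus (the quotient of the additive group ℝⁿ by the subgroup ℤⁿ of integer vectors, with the quotient topology). Then the image π(V), equipped with the subspace topology, is homeomorphic to the k-dimensional torus ℝᵏ/ℤᵏ. -/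
/-- The subgroup `ℤⁿ` of integer vectors in `ℝⁿ`. -/
def intLattice (n : ℕ) : AddSubgroup (Fin n → ℝ) :=
  AddSubgroup.pi Set.univ fun _ => AddSubgroup.zmultiples (1 : ℝ)

/-- The `n`-dimensional torus `ℝⁿ/ℤⁿ`, with the quotient topology. -/
abbrev Torus (n : ℕ) := (Fin n → ℝ) ⧸ intLattice n

/-!
Write `V = x₀ + W` with `W = ker A`. Since `A` is rational, `W` is spanned by rational vectors
(the dimension of a kernel does not change under the field extension `ℚ ⊆ ℝ`), hence, after
clearing denominators, by integer vectors. So `Λ = W ∩ ℤⁿ` is a lattice of full rank `k` in `W`.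
Choosing a `ℤ`-basis of `Λ` as coordinates on `W`, the map `t ↦ π (x₀ + ∑ tᵢ vᵢ)` from `ℝᵏ` onto
`π(V)` identifies exactly the points of `ℝᵏ` that differ by `ℤᵏ`. It therefore induces a
continuous bijection from the compact torus `ℝᵏ/ℤᵏ` onto the Hausdorff space `π(V)`, which is a
homeomorphism.
-/

open Module Submodule
open scoped Pointwise

theorem QuotientAddGroup.nonempty_homeomorph_range {G X : Type*} [AddGroup G]
    [TopologicalSpace G] [TopologicalSpace X] [T2Space X] (N : AddSubgroup G)
    [CompactSpace (G ⧸ N)] (f : G → X) (hf : Continuous f)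
    (hfN : ∀ x y, f x = f y ↔ -x + y ∈ N) : Nonempty (G ⧸ N ≃ₜ Set.range f) := by
  let g : G ⧸ N ≃ Set.range f := Equiv.ofBijective
    (Quotient.lift (Set.rangeFactorization f) fun x y h =>
      Subtype.ext ((hfN x y).2 (QuotientAddGroup.leftRel_apply.1 h)))
    ⟨fun x y => Quotient.inductionOn₂ x y fun x y h =>
      QuotientAddGroup.eq.2 ((hfN x y).1 (congrArg Subtype.val h)),
     fun ⟨_, x, hx⟩ => ⟨QuotientAddGroup.mk x, Subtype.ext hx⟩⟩
  have hg : Continuous g :=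
    (QuotientAddGroup.isQuotientMap_mk N).continuous_iff.2 (hf.subtype_mk _)
  exact ⟨hg.homeoOfEquivCompactToT2⟩

theorem LinearMap.preimage_singleton_eq_vadd_ker {R M N : Type*} [Ring R] [AddCommGroup M]
    [AddCommGroup N] [Module R M] [Module R N] (f : M →ₗ[R] N) (x₀ : M) :
    f ⁻¹' {f x₀} = x₀ +ᵥ (LinearMap.ker f : Set M) := by
  ext x
  rw [Set.mem_vadd_set_iff_neg_vadd_mem, vadd_eq_add, SetLike.mem_coe, LinearMap.mem_ker,
    map_add, map_neg, neg_add_eq_zero, Set.mem_preimage, Set.mem_singleton_iff, eq_comm]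

namespace Matrix

variable {K L : Type*} [Field K] [Field L] [Algebra K L] {m n : Type*} [Fintype m] [Fintype n]

theorem rank_le_rank_map_algebraMap (B : Matrix m n K) :
    B.rank ≤ (B.map (algebraMap K L)).rank := by
  obtain ⟨κ, a, ha, hspan, hli⟩ := exists_linearIndependent' K B.col
  have := Finite.of_injective a ha
  have := Fintype.ofFinite κ
  have hliL : LinearIndependent L (fun i => algebraMap K L ∘ B.col (a i)) :=
    linearIndependent_algebraMap_comp_iff.2 hli
  rw [rank_eq_finrank_span_cols, rank_eq_finrank_span_cols, ← hspan, finrank_span_eq_card hli,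
    ← finrank_span_eq_card hliL]
  exact Submodule.finrank_mono (span_mono (Set.range_subset_iff.2 fun i => ⟨a i, rfl⟩))

theorem finrank_ker_map_algebraMap_le (B : Matrix m n K) :
    finrank L (LinearMap.ker (B.map (algebraMap K L)).mulVecLin) ≤
      finrank K (LinearMap.ker B.mulVecLin) := by
  have hrank := rank_le_rank_map_algebraMap (L := L) B
  have hL := LinearMap.finrank_range_add_finrank_ker (B.map (algebraMap K L)).mulVecLin
  have hK := LinearMap.finrank_range_add_finrank_ker B.mulVecLin
  rw [finrank_fintype_fun_eq_card] at hL hK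
  rw [rank, rank] at hrank
  omega

theorem span_algebraMap_image_ker_mulVecLin (B : Matrix m n K) :
    span L ((algebraMap K L ∘ ·) '' (LinearMap.ker B.mulVecLin : Set (n → K))) =
      LinearMap.ker (B.map (algebraMap K L)).mulVecLin := by
  set S := (algebraMap K L ∘ ·) '' (LinearMap.ker B.mulVecLin : Set (n → K))
  have hle : span L S ≤ LinearMap.ker (B.map (algebraMap K L)).mulVecLin := by
    rw [span_le]
    rintro _ ⟨v, hv, rfl⟩
    have hv : B *ᵥ v = 0 := hv
    change B.map (algebraMap K L) *ᵥ (algebraMap K L ∘ v) = 0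
    ext i
    rw [← RingHom.map_mulVec, hv]
    simp
  refine eq_of_le_of_finrank_le hle ((finrank_ker_map_algebraMap_le B).trans ?_)
  have bK := finBasis K (LinearMap.ker B.mulVecLin)
  have hli : LinearIndependent L fun i => algebraMap K L ∘ (bK i : n → K) :=
    linearIndependent_algebraMap_comp_iff.2 <|
      bK.linearIndependent.map' (LinearMap.ker B.mulVecLin).subtype (ker_subtype _)
  calc finrank K (LinearMap.ker B.mulVecLin) = Fintype.card (Fin _) := (Fintype.card_fin _).symm
    _ = finrank L (span L (Set.range fun i => algebraMap K L ∘ (bK i : n → K))) :=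
      (finrank_span_eq_card hli).symm
    _ ≤ finrank L (span L S) := Submodule.finrank_mono
      (span_mono (Set.range_subset_iff.2 fun i => Set.mem_image_of_mem _ (bK i).2))

end Matrix

theorem Module.Basis.ofZLatticeBasis_equivFun_symm_mem_iff {E ι : Type*} [NormedAddCommGroup E]
    [NormedSpace ℝ E] [FiniteDimensional ℝ E] [Fintype ι] {L : Submodule ℤ E}
    [DiscreteTopology L] [IsZLattice ℝ L] (b : Basis ι ℤ L) (t : ι → ℝ) :
    (b.ofZLatticeBasis ℝ L).equivFun.symm t ∈ L ↔ ∀ i, t i ∈ Set.range (algebraMap ℤ ℝ) := by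
  set bE := b.ofZLatticeBasis ℝ L
  rw [← b.ofZLatticeBasis_span ℝ, Basis.mem_span_iff_repr_mem]
  refine forall_congr' fun i => ?_
  rw [← bE.equivFun_apply, LinearEquiv.apply_symm_apply]

section IntLattice

variable {n : ℕ}

theorem mem_intLattice_iff {x : Fin n → ℝ} :
    x ∈ intLattice n ↔ ∀ i, x i ∈ Set.range (algebraMap ℤ ℝ) := by
  simp [intLattice, AddSubgroup.mem_pi, AddSubgroup.mem_zmultiples_iff]

theorem intLattice_toIntSubmodule :
    (intLattice n).toIntSubmodule = span ℤ (Set.range (Pi.basisFun ℝ (Fin n))) := by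
  ext x
  rw [← SetLike.mem_coe, AddSubgroup.coe_toIntSubmodule, SetLike.mem_coe, mem_intLattice_iff,
    Basis.mem_span_iff_repr_mem]
  simp

instance : DiscreteTopology (intLattice n).toIntSubmodule := by
  rw [intLattice_toIntSubmodule]
  infer_instance

instance : IsZLattice ℝ (intLattice n).toIntSubmodule :=
  ⟨by rw [intLattice_toIntSubmodule, ZSpan.span_top]⟩

instance : T2Space (Torus n) := by
  have : DiscreteTopology (intLattice n) :=
    inferInstanceAs (DiscreteTopology (intLattice n).toIntSubmodule)
  have : IsClosed (intLattice n : Set (Fin n → ℝ)) := AddSubgroup.isClosed_of_discrete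
  infer_instance

instance : CompactSpace (Torus n) := by
  refine ⟨?_⟩
  rw [← (QuotientAddGroup.mk_surjective (s := intLattice n)).range_eq]
  exact IsZLattice.isCompact_range_of_periodic (intLattice n).toIntSubmodule _
    QuotientAddGroup.continuous_mk fun z w hw => by
      rw [QuotientAddGroup.eq_iff_sub_mem, add_sub_cancel_left]
      exact hw

theorem span_intLattice_inter_ker {m : Type*} [Fintype m] (B : Matrix m (Fin n) ℚ) :
    span ℝ ((intLattice n : Set (Fin n → ℝ)) ∩
        LinearMap.ker (B.map (algebraMap ℚ ℝ)).mulVecLin) =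
      LinearMap.ker (B.map (algebraMap ℚ ℝ)).mulVecLin := by
  refine le_antisymm (span_le.2 Set.inter_subset_right) ?_
  conv_lhs => rw [← B.span_algebraMap_image_ker_mulVecLin]
  rw [span_le]
  rintro _ ⟨v, hv, rfl⟩
  obtain ⟨⟨c, hc⟩, hcv⟩ := IsLocalization.exist_integer_multiples_of_finite (nonZeroDivisors ℤ) v
  have hint : algebraMap ℚ ℝ ∘ (c • v) ∈ intLattice n := mem_intLattice_iff.2 fun i => by
    obtain ⟨z, hz⟩ := hcv i
    exact ⟨z, by simpa using congrArg (algebraMap ℚ ℝ) hz⟩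
  have hker : algebraMap ℚ ℝ ∘ (c • v) ∈ LinearMap.ker (B.map (algebraMap ℚ ℝ)).mulVecLin :=
    B.span_algebraMap_image_ker_mulVecLin (L := ℝ) ▸ subset_span ⟨c • v, zsmul_mem hv c, rfl⟩
  have hc0 : (c : ℝ) ≠ 0 := Int.cast_ne_zero.2 (nonZeroDivisors.coe_ne_zero ⟨c, hc⟩)
  have hv_eq : algebraMap ℚ ℝ ∘ v = (c : ℝ)⁻¹ • (algebraMap ℚ ℝ ∘ (c • v)) := by
    ext i
    simp [hc0]
  change algebraMap ℚ ℝ ∘ v ∈ _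
  rw [hv_eq]
  exact smul_mem _ _ (subset_span ⟨hint, hker⟩)

noncomputable abbrev integerPoints (W : Submodule ℝ (Fin n → ℝ)) : Submodule ℤ W :=
  ZLattice.comap ℝ (intLattice n).toIntSubmodule W.subtype

instance (W : Submodule ℝ (Fin n → ℝ)) : DiscreteTopology (integerPoints W) :=
  ZLattice.comap_discreteTopology ℝ _ continuous_subtype_val W.injective_subtype

theorem isZLattice_integerPoints {W : Submodule ℝ (Fin n → ℝ)}
    (hW : span ℝ ((intLattice n : Set (Fin n → ℝ)) ∩ W) = W) :
    IsZLattice ℝ (integerPoints W) := by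
  refine ⟨map_injective_of_injective W.injective_subtype ?_⟩
  rw [map_span, Submodule.map_top, range_subtype, ZLattice.coe_comap, W.coe_subtype,
    Set.image_preimage_eq_inter_range, Subtype.range_coe, AddSubgroup.coe_toIntSubmodule, hW]

theorem nonempty_homeomorph_torus_image_vadd (W : Submodule ℝ (Fin n → ℝ))
    [IsZLattice ℝ (integerPoints W)] (x₀ : Fin n → ℝ) :
    Nonempty (Torus (finrank ℝ W) ≃ₜ
      QuotientAddGroup.mk' (intLattice n) '' (x₀ +ᵥ (W : Set (Fin n → ℝ)))) := by
  let bZ := finBasisOfFinrankEq ℤ (integerPoints W) (ZLattice.rank ℝ _)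
  let b := bZ.ofZLatticeBasis ℝ (integerPoints W)
  let φ : (Fin (finrank ℝ W) → ℝ) → Torus n := fun t => ↑(x₀ + b.equivFunL.symm t)
  have hφ : Continuous φ := by fun_prop
  have hφN : ∀ s t, φ s = φ t ↔ -s + t ∈ intLattice (finrank ℝ W) := by
    intro s t
    have hsub : -(x₀ + (b.equivFunL.symm s : Fin n → ℝ)) + (x₀ + b.equivFunL.symm t) =
        b.equivFunL.symm (-s + t) := by
      simp only [map_add, map_neg, Submodule.coe_add, Submodule.coe_neg]
      abel
    rw [QuotientAddGroup.eq, hsub, mem_intLattice_iff (x := -s + t)]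
    exact bZ.ofZLatticeBasis_equivFun_symm_mem_iff (-s + t)
  have hrange :
      Set.range φ = QuotientAddGroup.mk' (intLattice n) '' (x₀ +ᵥ (W : Set (Fin n → ℝ))) := by
    ext y
    constructor
    · rintro ⟨t, rfl⟩
      exact ⟨_, Set.vadd_mem_vadd_set (b.equivFunL.symm t).2, rfl⟩
    · rintro ⟨_, ⟨w, hw, rfl⟩, rfl⟩
      exact ⟨b.equivFunL ⟨w, hw⟩, by simp [φ]⟩
  obtain ⟨e⟩ := QuotientAddGroup.nonempty_homeomorph_range _ φ hφ hφN
  exact ⟨e.trans (Homeomorph.setCongr hrange)⟩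

end IntLattice

theorem toric_subspace_general (n m k : ℕ)
    (A : Matrix (Fin m) (Fin n) ℝ) (hA : ∀ i j, ∃ q : ℚ, A i j = (q : ℝ))
    (b : Fin m → ℝ)
    (hne : {x : Fin n → ℝ | A.mulVec x = b}.Nonempty)
    (hk : Module.finrank ℝ (LinearMap.ker A.mulVecLin) = k) :
    Nonempty
      ((↥((QuotientAddGroup.mk' (intLattice n)) ''
          {x : Fin n → ℝ | A.mulVec x = b})) ≃ₜ Torus k) := by
  choose B hB using hA
  obtain rfl : A = (Matrix.of B).map (algebraMap ℚ ℝ) := by ext i j; exact hB i j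
  obtain ⟨x₀, rfl⟩ := hne
  set W := LinearMap.ker ((Matrix.of B).map (algebraMap ℚ ℝ)).mulVecLin
  have : IsZLattice ℝ (integerPoints W) :=
    isZLattice_integerPoints (span_intLattice_inter_ker (Matrix.of B))
  obtain ⟨e⟩ := nonempty_homeomorph_torus_image_vadd W x₀
  rw [← LinearMap.preimage_singleton_eq_vadd_ker, hk] at e
  exact ⟨e.symm⟩

/-- the image on the torus `ℝⁿ/ℤⁿ` of a nonempty `k`-dimensional affine
subspace `V = {x | A·x = b}` of `ℝⁿ` with rational coefficient matrix `A` is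
homeomorphic to the `k`-dimensional torus `ℝᵏ/ℤᵏ`. -/
theorem toric_subspace (n m k : ℕ) (hn : 1 ≤ n)
    (A : Matrix (Fin m) (Fin n) ℝ) (hA : ∀ i j, ∃ q : ℚ, A i j = (q : ℝ))
    (b : Fin m → ℝ)
    (hne : {x : Fin n → ℝ | A.mulVec x = b}.Nonempty)
    (hk : Module.finrank ℝ (LinearMap.ker A.mulVecLin) = k) :
    Nonempty
      ((↥((QuotientAddGroup.mk' (intLattice n)) ''
          {x : Fin n → ℝ | A.mulVec x = b})) ≃ₜ Torus k) :=
  toric_subspace_general n m k A hA b hne hk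
end
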